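/- Let n≥1, let F be a family of open balls in ℝ^{n+1} and let L>1. Define P_k=∪{LB : B∈F, diam B<1/k} for k≥1, H=∪{B : B∈F}, and P=(∩_{k≥1}P_k)∖H. Then P is porous with porosity constant 1/L: for every x∈P and every δ>0 there exists y∈ℝ^{n+1} with 0<‖y−x‖<δ such that B(y,(1/L)‖y−x‖)∩P=∅. -/

import Mathlib

/-! A point `x ∈ P` lies, at every scale, in the `L`-enlargement of some small hole `B(c, r)`
without lying in the hole itself, so `r ≤ ‖c - x‖ < L r`. The centre `c` is then a porosity
witness: it is close to `x`, and `B(c, ‖c - x‖ / L)` sits inside the hole, which misses `P`. -/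

open Set Metric MeasureTheory

noncomputable section

abbrev Euc (m : ℕ) : Type := EuclideanSpace ℝ (Fin m)

/-- `P_k`: the union of the `L`-enlargements of those balls of the family `F`
(given by centre-radius pairs) of diameter less than `1/k`. -/
def holesPk (m : ℕ) (F : Set (Euc m × ℝ)) (L : ℝ) (k : ℕ) : Set (Euc m) :=
  ⋃ p ∈ {q ∈ F | 2 * q.2 < 1 / (k : ℝ)}, Metric.ball p.1 (L * p.2)

/-- `H`: the union of all the balls (holes) of the family `F`. -/
def holesH (m : ℕ) (F : Set (Euc m × ℝ)) : Set (Euc m) :=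
  ⋃ p ∈ F, Metric.ball p.1 p.2

/-- `P = (⋂_{k ≥ 1} P_k) \ H`. -/
def holesP (m : ℕ) (F : Set (Euc m × ℝ)) (L : ℝ) : Set (Euc m) :=
  (⋂ k ∈ {j : ℕ | 1 ≤ j}, holesPk m F L k) \ holesH m F

section Dist

variable {X : Type*} [PseudoMetricSpace X] {c x : X} {r L : ℝ}

lemma pos_of_dist_lt_mul (hL : 0 ≤ L) (hxL : dist x c < L * r) : 0 < r :=
  pos_of_mul_pos_right (dist_nonneg.trans_lt hxL) hL

lemma ball_subset_ball_of_dist_lt_mul (hL : 0 < L) (hxL : dist x c < L * r) :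
    ball c ((1 / L) * dist c x) ⊆ ball c r := by
  refine ball_subset_ball ?_
  rw [one_div, inv_mul_le_iff₀ hL, dist_comm]
  exact hxL.le

end Dist

section Holes

variable {m : ℕ} {F : Set (Euc m × ℝ)} {L : ℝ}

lemma inter_holesP_eq_empty_of_subset_ball {p : Euc m × ℝ} (hp : p ∈ F) {s : Set (Euc m)}
    (hs : s ⊆ ball p.1 p.2) : s ∩ holesP m F L = ∅ := by
  refine eq_empty_of_forall_notMem fun z ⟨hzs, hzP⟩ => hzP.2 ?_
  exact mem_iUnion₂.2 ⟨p, hp, hs hzs⟩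

lemma exists_small_annulus_of_mem_holesP {x : Euc m} (hx : x ∈ holesP m F L) {ε : ℝ}
    (hε : 0 < ε) : ∃ p ∈ F, 2 * p.2 < ε ∧ p.2 ≤ dist x p.1 ∧ dist x p.1 < L * p.2 := by
  obtain ⟨k, hk⟩ := exists_nat_one_div_lt hε
  have hxPk : x ∈ holesPk m F L (k + 1) := mem_iInter₂.1 hx.1 (k + 1) (Nat.le_add_left 1 k)
  obtain ⟨p, ⟨hpF, hpk⟩, hxL⟩ := mem_iUnion₂.1 hxPk
  have hxr : x ∉ ball p.1 p.2 := fun hxr => hx.2 (mem_iUnion₂.2 ⟨p, hpF, hxr⟩)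
  push_cast at hpk
  exact ⟨p, hpF, hpk.trans hk, not_lt.1 hxr, hxL⟩

end Holes

theorem holesP_porous_with_constant_general (n : ℕ)
    (F : Set (Euc (n + 1) × ℝ)) (L : ℝ) (hL : 1 < L) :
    ∀ x ∈ holesP (n + 1) F L, ∀ δ : ℝ, 0 < δ → ∃ y : Euc (n + 1), y ≠ x ∧ ‖y - x‖ < δ ∧
      Metric.ball y ((1 / L) * ‖y - x‖) ∩ holesP (n + 1) F L = ∅ := by
  intro x hx δ hδ
  have hL0 : 0 < L := zero_lt_one.trans hL
  obtain ⟨⟨c, r⟩, hpF, hrδ, hxr, hxL⟩ :=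
    exists_small_annulus_of_mem_holesP hx (ε := 2 * δ / L) (by positivity)
  have hr : 0 < r := pos_of_dist_lt_mul hL0.le hxL
  refine ⟨c, ?_, ?_, ?_⟩
  · exact fun hcx => (hr.trans_le hxr).ne' (by rw [hcx, dist_self])
  · calc ‖c - x‖ = dist x c := by rw [dist_comm, dist_eq_norm]
      _ < L * r := hxL
      _ < δ := by rw [lt_div_iff₀ hL0] at hrδ; linarith
  · rw [← dist_eq_norm]
    exact inter_holesP_eq_empty_of_subset_ball hpF (ball_subset_ball_of_dist_lt_mul hL0 hxL)

/-- The set `P = (⋂_{k ≥ 1} P_k) \ H` built from a family `F` of open balls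
and an enlargement factor `L > 1` is porous with porosity constant `1/L`. -/
theorem holesP_porous_with_constant (n : ℕ) (hn : 1 ≤ n)
    (F : Set (Euc (n + 1) × ℝ)) (hF : ∀ p ∈ F, 0 < p.2) (L : ℝ) (hL : 1 < L) :
    ∀ x ∈ holesP (n + 1) F L, ∀ δ : ℝ, 0 < δ → ∃ y : Euc (n + 1), y ≠ x ∧ ‖y - x‖ < δ ∧
      Metric.ball y ((1 / L) * ‖y - x‖) ∩ holesP (n + 1) F L = ∅ :=
  holesP_porous_with_constant_general n F L hL

end
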